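/- arXiv:2503.17809 — 2 statements merged into one kernel-verified Lean document; each statement's English description precedes it below -/
import Mathlib

section
/- Fix integers d ≥ 1 and K ≥ 1, a real β > 0, and constants c₁ > 0, c₃ > 0. Let A₁, …, A_K : 𝒵 → [0,∞) each be β-Hölder smooth with constant c₁ on 𝒵 = [0,1]^d, and suppose h(z) := Σ_{k=1}^{K} A_k(z) ≥ c₃ for all z ∈ 𝒵. Let ℛ₁, …, ℛ_M be any finite measurable partition of 𝒵 with Vol(ℛ_m) > 0 for every m. Define the K × K matrices Σ_A^{net}(k,ℓ) = Σ_{m=1}^{M} ( ∫_{ℛ_m} A_k(z) dz · ∫_{ℛ_m} A_ℓ(z) dz ) / ∫_{ℛ_m} h(z) dz and Σ_𝒜(k,ℓ) = ∫_𝒵 A_k(z) A_ℓ(z) / h(z) dz. Then there exists a constant C > 0, depending only on (K, d, β, c₁, c₃), such that | Σ_A^{net}(k,ℓ) − Σ_𝒜(k,ℓ) | ≤ C · max_{1 ≤ m ≤ M} diam(ℛ_m)^{β∧1} for all 1 ≤ k, ℓ ≤ K; consequently the operator norm satisfies ‖Σ_A^{net} − Σ_𝒜‖ ≤ C K · max_m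 diam(ℛ_m)^{β∧1}. -/
open MeasureTheory
open scoped BigOperators ENNReal NNReal

/-- `𝒵 = [0,1]^d`, inside `ℝ^d` equipped with the Euclidean norm. -/
def eZ (d : ℕ) : Set (EuclideanSpace ℝ (Fin d)) :=
  {z | ∀ r, z r ∈ Set.Icc (0:ℝ) 1}

/-- `𝒵_h = {z ∈ 𝒵 : ‖z − z₀‖ ≥ h for every z₀ ∈ ℝ^d ∖ 𝒵}`. -/
def eZh (d : ℕ) (h : ℝ) : Set (EuclideanSpace ℝ (Fin d)) :=
  {z | z ∈ eZ d ∧ ∀ z₀ ∉ eZ d, h ≤ ‖z - z₀‖}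

/-- `f` is β-Hölder smooth with constant `c₁` on `S`: with `p = ⌈β⌉₊ - 1` the largest
integer strictly smaller than `β`, `f` is `p` times continuously differentiable on `S`,
all derivatives of order at most `p` are bounded by `c₁` on `S`, and the order-`p`
derivative is `(β − p)`-Hölder continuous on `S` with constant `c₁`. -/
def HolderSmoothOn {d : ℕ} (β c₁ : ℝ) (f : EuclideanSpace ℝ (Fin d) → ℝ)
    (S : Set (EuclideanSpace ℝ (Fin d))) : Prop :=
  ContDiffOn ℝ (⌈β⌉₊ - 1 : ℕ) f S ∧
    (∀ i : ℕ, i ≤ ⌈β⌉₊ - 1 → ∀ x ∈ S, ‖iteratedFDerivWithin ℝ i f S x‖ ≤ c₁) ∧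
    ∀ x ∈ S, ∀ y ∈ S,
      ‖iteratedFDerivWithin ℝ (⌈β⌉₊ - 1) f S x - iteratedFDerivWithin ℝ (⌈β⌉₊ - 1) f S y‖ ≤
        c₁ * ‖x - y‖ ^ (β - (⌈β⌉₊ - 1 : ℕ))

/-- `κ` is an order-β kernel on `[0,1]`: it vanishes outside `[0,1]`, integrates to one,
its moments of order `1 ≤ k ≤ ⌊β⌋` (i.e. `k < β`) vanish, and `∫ |u|^β |κ(u)| du < ∞`. -/
def IsOrderBetaKernel (β : ℝ) (κ : ℝ → ℝ) : Prop :=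
  (∀ u : ℝ, u ∉ Set.Icc (0:ℝ) 1 → κ u = 0) ∧
    Integrable κ ∧ ((∫ u, κ u) = 1) ∧
    (∀ k : ℕ, 1 ≤ k → (k : ℝ) < β → (∫ u, u ^ k * κ u) = 0) ∧
    Integrable (fun u => |u| ^ β * |κ u|)

/-- The rescaled product kernel `𝒦_h(u) = h^{-d} ∏_r κ_r(u_r/h)`. -/
noncomputable def eKh (d : ℕ) (κ : Fin d → ℝ → ℝ) (h : ℝ)
    (u : EuclideanSpace ℝ (Fin d)) : ℝ :=
  (∏ r, κ r (u r / h)) / h ^ d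

/-- The axis-aligned hypercube with side `1/L` in `[0,1]^d` indexed by `j`. -/
def eGridCube (d L : ℕ) (j : Fin d → Fin L) : Set (EuclideanSpace ℝ (Fin d)) :=
  {z | ∀ r, z r ∈ Set.Ico ((j r : ℝ) / L) (((j r : ℝ) + 1) / L)}

/-- The smoothing weight `ζ_m(z₀) = Vol(ℛ_m)^{-1} ∫_{ℛ_m} 𝒦_h(z − z₀) dz` on the grid. -/
noncomputable def eZeta (d L : ℕ) (κ : Fin d → ℝ → ℝ) (h : ℝ)
    (j : Fin d → Fin L) (z₀ : EuclideanSpace ℝ (Fin d)) : ℝ :=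
  (∫ z in eGridCube d L j, eKh d κ h (z - z₀)) / (volume (eGridCube d L j)).toReal

namespace Stmt10Aux

variable {d : ℕ}

lemma coord_abs_le_norm (x : EuclideanSpace ℝ (Fin d)) (r : Fin d) : |x r| ≤ ‖x‖ := by
  rw [EuclideanSpace.norm_eq]
  have h1 : |x r| = Real.sqrt (‖x r‖ ^ 2) := by
    rw [Real.sqrt_sq_eq_abs, abs_norm, Real.norm_eq_abs]
  rw [h1]
  apply Real.sqrt_le_sqrt
  exact Finset.single_le_sum (f := fun i => ‖x i‖ ^ 2) (fun i _ => by positivity) (Finset.mem_univ r)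

lemma convex_eZ : Convex ℝ (eZ d) := by
  intro x hx y hy a b ha hb hab
  intro r
  have h1 := hx r
  have h2 := hy r
  simp only [Set.mem_Icc] at h1 h2 ⊢
  have : (a • x + b • y) r = a * x r + b * y r := rfl
  rw [this]
  constructor
  · nlinarith
  · nlinarith

lemma isClosed_eZ : IsClosed (eZ d) := by
  have : eZ d = ⋂ r, (fun z : EuclideanSpace ℝ (Fin d) => z r) ⁻¹' Set.Icc (0:ℝ) 1 := by
    ext z; simp [eZ]
  rw [this]
  exact isClosed_iInter fun r =>
    IsClosed.preimage (EuclideanSpace.proj (𝕜 := ℝ) r).continuous isClosed_Icc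

lemma measurableSet_eZ : MeasurableSet (eZ d) := isClosed_eZ.measurableSet

lemma eZ_subset_ball : eZ d ⊆ Metric.closedBall 0 (Real.sqrt d) := by
  intro z hz
  simp only [Metric.mem_closedBall, dist_zero_right]
  rw [EuclideanSpace.norm_eq]
  apply Real.sqrt_le_sqrt
  calc ∑ i, ‖z i‖ ^ 2 ≤ ∑ _i : Fin d, (1:ℝ) := by
        apply Finset.sum_le_sum
        intro i _
        have := hz i
        simp only [Set.mem_Icc] at this
        rw [Real.norm_eq_abs, abs_of_nonneg this.1]
        nlinarith [this.2]
    _ = d := by simp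

lemma volume_eZ_lt_top : volume (eZ d) < ∞ :=
  lt_of_le_of_lt (measure_mono eZ_subset_ball) (MeasureTheory.measure_closedBall_lt_top)

lemma uniqueDiffOn_eZ : UniqueDiffOn ℝ (eZ d) := by
  apply uniqueDiffOn_convex convex_eZ
  set c : EuclideanSpace ℝ (Fin d) := WithLp.toLp 2 (fun _ => (1:ℝ)/2) with hc
  refine ⟨c, ?_⟩
  rw [mem_interior_iff_mem_nhds]
  apply Filter.mem_of_superset (Metric.ball_mem_nhds _ (by norm_num : (0:ℝ) < 1/2))
  intro y hy r
  simp only [Metric.mem_ball, dist_eq_norm] at hy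
  have := coord_abs_le_norm (y - c) r
  have hyr : (y - c) r = y r - 1/2 := rfl
  rw [hyr] at this
  have h2 : |y r - 1/2| < 1/2 := lt_of_le_of_lt this hy
  rw [abs_lt] at h2
  constructor <;> [linarith [h2.1]; linarith [h2.2]]


lemma holder_abs_le {β c₁ : ℝ} {f : EuclideanSpace ℝ (Fin d) → ℝ}
    (hf : HolderSmoothOn β c₁ f (eZ d)) {x} (hx : x ∈ eZ d) : |f x| ≤ c₁ := by
  have h := hf.2.1 0 (Nat.zero_le _) x hx
  rwa [norm_iteratedFDerivWithin_zero, Real.norm_eq_abs] at h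

lemma holder_osc {β c₁ : ℝ} (hβ : 0 < β) (hc₁ : 0 < c₁) {f : EuclideanSpace ℝ (Fin d) → ℝ}
    (hf : HolderSmoothOn β c₁ f (eZ d)) {D : ℝ} (hD : 0 ≤ D) {x y : EuclideanSpace ℝ (Fin d)}
    (hx : x ∈ eZ d) (hy : y ∈ eZ d) (hxy : ‖x - y‖ ≤ D) :
    |f x - f y| ≤ c₁ * D ^ min β 1 := by
  rcases le_or_gt β 1 with h1 | h1
  · -- p = 0, Hölder exponent β
    have hle : ⌈β⌉₊ ≤ 1 := Nat.ceil_le.mpr (by exact_mod_cast h1)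
    have hp : (⌈β⌉₊ - 1 : ℕ) = 0 := by omega
    have h3 := hf.2.2 x hx y hy
    rw [hp] at h3
    have e : ‖iteratedFDerivWithin ℝ 0 f (eZ d) x - iteratedFDerivWithin ℝ 0 f (eZ d) y‖ =
        |f x - f y| := by
      rw [iteratedFDerivWithin_zero_eq_comp]
      simp only [Function.comp_apply, ← LinearIsometryEquiv.map_sub,
        LinearIsometryEquiv.norm_map, Real.norm_eq_abs]
    rw [e] at h3
    have hmin : min β 1 = β := min_eq_left h1
    have hexp : β - ((0:ℕ):ℝ) = β := by simp
    rw [hexp] at h3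
    calc |f x - f y| ≤ c₁ * ‖x - y‖ ^ β := h3
      _ ≤ c₁ * D ^ β := by
          apply mul_le_mul_of_nonneg_left _ hc₁.le
          exact Real.rpow_le_rpow (norm_nonneg _) hxy hβ.le
      _ = c₁ * D ^ min β 1 := by rw [hmin]
  · -- β > 1 : Lipschitz with constant c₁
    have hp1 : 1 ≤ (⌈β⌉₊ - 1 : ℕ) := by
      have : (2:ℕ) ≤ ⌈β⌉₊ := by
        have := Nat.lt_ceil.mpr (by exact_mod_cast h1 : ((1:ℕ):ℝ) < β)
        omega
      omega
    have hdiff : DifferentiableOn ℝ f (eZ d) := by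
      apply (hf.1).differentiableOn
      exact_mod_cast (by omega : (⌈β⌉₊ - 1 : ℕ) ≠ 0)
    have hbound : ∀ z ∈ eZ d, ‖fderivWithin ℝ f (eZ d) z‖ ≤ c₁ := by
      intro z hz
      apply ContinuousLinearMap.opNorm_le_bound _ hc₁.le
      intro v
      have happ : fderivWithin ℝ f (eZ d) z v =
          iteratedFDerivWithin ℝ 1 f (eZ d) z (fun _ => v) := by
        rw [iteratedFDerivWithin_one_apply (uniqueDiffOn_eZ z hz)]
      rw [Real.norm_eq_abs, happ, ← Real.norm_eq_abs]
      calc ‖iteratedFDerivWithin ℝ 1 f (eZ d) z (fun _ => v)‖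
          ≤ ‖iteratedFDerivWithin ℝ 1 f (eZ d) z‖ * ∏ _i : Fin 1, ‖v‖ :=
            (iteratedFDerivWithin ℝ 1 f (eZ d) z).le_opNorm _
        _ ≤ c₁ * ‖v‖ := by
            simp only [Finset.prod_const, Finset.card_univ, Fintype.card_fin, pow_one]
            exact mul_le_mul_of_nonneg_right (hf.2.1 1 hp1 z hz) (norm_nonneg _)
    have hlip := convex_eZ.norm_image_sub_le_of_norm_fderivWithin_le hdiff hbound hy hx
    have hmin : min β 1 = 1 := min_eq_right h1.le
    rw [hmin, Real.rpow_one]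
    calc |f x - f y| = ‖f x - f y‖ := (Real.norm_eq_abs _).symm
      _ ≤ c₁ * ‖x - y‖ := hlip
      _ ≤ c₁ * D := mul_le_mul_of_nonneg_left hxy hc₁.le


lemma quot_bound {f g a b hh hs c₁ c₃ ω ω₂ : ℝ}
    (hc₃ : 0 < c₃)
    (hf0 : 0 ≤ f) (hf1 : f ≤ c₁) (hg0 : 0 ≤ g) (hg1 : g ≤ c₁)
    (ha0 : 0 ≤ a) (ha1 : a ≤ c₁) (hb0 : 0 ≤ b) (hb1 : b ≤ c₁)
    (hhh : c₃ ≤ hh) (hhs : c₃ ≤ hs)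
    (hfa : |f - a| ≤ ω) (hgb : |g - b| ≤ ω) (hdd : |hh - hs| ≤ ω₂) :
    |f * g / hh - a * b / hs| ≤ 2 * c₁ * ω / c₃ + c₁ ^ 2 * ω₂ / c₃ ^ 2 := by
  have hc₁ : 0 ≤ c₁ := le_trans hf0 hf1
  have hω : 0 ≤ ω := le_trans (abs_nonneg _) hfa
  have hω₂ : 0 ≤ ω₂ := le_trans (abs_nonneg _) hdd
  have hh0 : 0 < hh := lt_of_lt_of_le hc₃ hhh
  have hs0 : 0 < hs := lt_of_lt_of_le hc₃ hhs
  have key : |f * g - a * b| ≤ 2 * c₁ * ω := by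
    have hsplit : f * g - a * b = (f - a) * g + a * (g - b) := by ring
    rw [hsplit]
    calc |(f - a) * g + a * (g - b)| ≤ |(f - a) * g| + |a * (g - b)| := abs_add_le _ _
      _ = |f - a| * g + a * |g - b| := by
          rw [abs_mul, abs_mul, abs_of_nonneg hg0, abs_of_nonneg ha0]
      _ ≤ ω * c₁ + c₁ * ω := by
          apply add_le_add
          · exact mul_le_mul hfa hg1 hg0 hω
          · exact mul_le_mul ha1 hgb (abs_nonneg _) hc₁
      _ = 2 * c₁ * ω := by ring
  have step1 : |f * g / hh - a * b / hh| ≤ 2 * c₁ * ω / c₃ := by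
    rw [div_sub_div_same, abs_div, abs_of_pos hh0]
    exact div_le_div₀ (by positivity) key hc₃ hhh
  have step2 : |a * b / hh - a * b / hs| ≤ c₁ ^ 2 * ω₂ / c₃ ^ 2 := by
    have e : a * b / hh - a * b / hs = a * b * (hs - hh) / (hh * hs) := by
      field_simp
    rw [e, abs_div, abs_mul, abs_of_pos (mul_pos hh0 hs0),
      abs_of_nonneg (mul_nonneg ha0 hb0)]
    apply div_le_div₀ (by positivity) _ (by positivity) _
    · calc a * b * |hs - hh| ≤ c₁ * c₁ * ω₂ := by
            apply mul_le_mul (mul_le_mul ha1 hb1 hb0 hc₁) _ (abs_nonneg _) (by positivity)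
            rw [abs_sub_comm]; exact hdd
        _ = c₁ ^ 2 * ω₂ := by ring
    · calc c₃ ^ 2 = c₃ * c₃ := sq c₃
        _ ≤ hh * hs := mul_le_mul hhh hhs hc₃.le hh0.le
  calc |f * g / hh - a * b / hs|
      ≤ |f * g / hh - a * b / hh| + |a * b / hh - a * b / hs| := abs_sub_le _ _ _
    _ ≤ 2 * c₁ * ω / c₃ + c₁ ^ 2 * ω₂ / c₃ ^ 2 := add_le_add step1 step2

lemma opNorm_aux {K : ℕ} (M : Matrix (Fin K) (Fin K) ℝ) {ε : ℝ} (hε : 0 ≤ ε)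
    (h : ∀ k ℓ, |M k ℓ| ≤ ε) :
    ‖LinearMap.toContinuousLinearMap (Matrix.toEuclideanLin M)‖ ≤ K * ε := by
  apply ContinuousLinearMap.opNorm_le_bound _ (by positivity)
  intro x
  rw [LinearMap.coe_toContinuousLinearMap']
  have hx2 : ‖x‖ ^ 2 = ∑ ℓ, ‖x ℓ‖ ^ 2 := by
    rw [EuclideanSpace.norm_eq, Real.sq_sqrt (by positivity)]
  set S : ℝ := ∑ ℓ, |x ℓ| with hS
  have hS0 : 0 ≤ S := Finset.sum_nonneg fun _ _ => abs_nonneg _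
  have hS2 : S ^ 2 ≤ (K : ℝ) * ‖x‖ ^ 2 := by
    rw [hx2]
    have := sq_sum_le_card_mul_sum_sq (s := Finset.univ) (f := fun ℓ : Fin K => |x ℓ|)
    simpa [sq_abs] using this
  have hcomp : ∀ k, ‖Matrix.toEuclideanLin M x k‖ ≤ ε * S := by
    intro k
    have e : Matrix.toEuclideanLin M x k = ∑ ℓ, M k ℓ * x ℓ := rfl
    rw [e, Real.norm_eq_abs]
    calc |∑ ℓ, M k ℓ * x ℓ| ≤ ∑ ℓ, |M k ℓ * x ℓ| := Finset.abs_sum_le_sum_abs _ _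
      _ ≤ ∑ ℓ, ε * |x ℓ| := by
          apply Finset.sum_le_sum
          intro ℓ _
          rw [abs_mul]
          exact mul_le_mul_of_nonneg_right (h k ℓ) (abs_nonneg _)
      _ = ε * S := by rw [hS, Finset.mul_sum]
  rw [EuclideanSpace.norm_eq]
  have hsum : ∑ k, ‖Matrix.toEuclideanLin M x k‖ ^ 2 ≤ ((K:ℝ) * ε * ‖x‖) ^ 2 := by
    calc ∑ k, ‖Matrix.toEuclideanLin M x k‖ ^ 2 ≤ ∑ _k : Fin K, (ε * S) ^ 2 := by
          apply Finset.sum_le_sum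
          intro k _
          exact pow_le_pow_left₀ (norm_nonneg _) (hcomp k) 2
      _ = (K : ℝ) * (ε * S) ^ 2 := by simp [mul_comm]
      _ ≤ ((K:ℝ) * ε * ‖x‖) ^ 2 := by
          have : (ε * S) ^ 2 = ε ^ 2 * S ^ 2 := by ring
          rw [this]
          have h2 : ε ^ 2 * S ^ 2 ≤ ε ^ 2 * ((K:ℝ) * ‖x‖ ^ 2) :=
            mul_le_mul_of_nonneg_left hS2 (by positivity)
          calc (K:ℝ) * (ε ^ 2 * S ^ 2) ≤ (K:ℝ) * (ε ^ 2 * ((K:ℝ) * ‖x‖ ^ 2)) :=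
                mul_le_mul_of_nonneg_left h2 (by positivity)
            _ = ((K:ℝ) * ε * ‖x‖) ^ 2 := by ring
  calc Real.sqrt (∑ k, ‖Matrix.toEuclideanLin M x k‖ ^ 2)
      ≤ Real.sqrt (((K:ℝ) * ε * ‖x‖) ^ 2) := Real.sqrt_le_sqrt hsum
    _ = (K:ℝ) * ε * ‖x‖ := Real.sqrt_sq (by positivity)

end Stmt10Aux

set_option maxHeartbeats 2000000
open Stmt10Aux

/-- Lemma 10 of the paper: comparing the topic-topic overlap matrix of the induced
hyperword model, `Σ_A^{net}(k,ℓ) = ∑ₘ (∫_{ℛ_m} A_k)(∫_{ℛ_m} A_ℓ)/∫_{ℛ_m} h`, with its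
continuous counterpart `Σ_𝒜(k,ℓ) = ∫_𝒵 A_k A_ℓ/h`: the entrywise difference is
`≤ C maxₘ diam(ℛ_m)^{β∧1}` and the operator-norm difference is
`≤ C K maxₘ diam(ℛ_m)^{β∧1}`. -/
theorem stmt10 (d K : ℕ) (hd : 1 ≤ d) (hK : 1 ≤ K) (β c₁ c₃ : ℝ)
    (hβ : 0 < β) (hc₁ : 0 < c₁) (hc₃ : 0 < c₃) :
    ∃ C : ℝ, 0 < C ∧
      ∀ A : Fin K → EuclideanSpace ℝ (Fin d) → ℝ,
        (∀ k, HolderSmoothOn β c₁ (A k) (eZ d)) →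
        (∀ k, ∀ z ∈ eZ d, 0 ≤ A k z) →
        (∀ z ∈ eZ d, c₃ ≤ ∑ k, A k z) →
        ∀ M : ℕ, 1 ≤ M →
        ∀ R : Fin M → Set (EuclideanSpace ℝ (Fin d)),
          (∀ m, MeasurableSet (R m)) →
          Pairwise (Function.onFun Disjoint R) →
          (⋃ m, R m) = eZ d →
          (∀ m, 0 < (volume (R m)).toReal) →
          ∀ D : ℝ, 0 ≤ D → (∀ m, Metric.diam (R m) ≤ D) →
            (∀ k ℓ,
              |(∑ m, (∫ z in R m, A k z) * (∫ z in R m, A ℓ z) /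
                    ∫ z in R m, ∑ k', A k' z) -
                  ∫ z in eZ d, A k z * A ℓ z / ∑ k', A k' z| ≤ C * D ^ min β 1) ∧
            ‖LinearMap.toContinuousLinearMap (Matrix.toEuclideanLin
                (Matrix.of fun k ℓ : Fin K =>
                  (∑ m, (∫ z in R m, A k z) * (∫ z in R m, A ℓ z) /
                      ∫ z in R m, ∑ k', A k' z) -
                    ∫ z in eZ d, A k z * A ℓ z / ∑ k', A k' z))‖ ≤
              C * K * D ^ min β 1 := by
  classical
  set Vd : ℝ := (volume (eZ d)).toReal with hVd
  have hVd0 : 0 ≤ Vd := ENNReal.toReal_nonneg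
  set C0 : ℝ := 2 * (2 * c₁ / c₃ + K * c₁ ^ 2 / c₃ ^ 2) * c₁ * Vd with hC0
  have hC00 : 0 ≤ C0 := by positivity
  refine ⟨C0 + 1, by positivity, ?_⟩
  intro A hA hA0 hhlb M hM R hRmeas hRdisj hRunion hRvol D hD hRdiam
  have hRsub : ∀ m, R m ⊆ eZ d := fun m => by
    rw [← hRunion]; exact Set.subset_iUnion R m
  have hAcont : ∀ k, ContinuousOn (A k) (eZ d) := fun k => (hA k).1.continuousOn
  have hhcont : ContinuousOn (fun z => ∑ k', A k' z) (eZ d) := by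
    apply continuousOn_finset_sum
    intro k _
    exact hAcont k
  have hAbd : ∀ k, ∀ z ∈ eZ d, A k z ≤ c₁ :=
    fun k z hz => (abs_le.mp (holder_abs_le (hA k) hz)).2
  have hhne : ∀ z ∈ eZ d, (∑ k', A k' z) ≠ 0 :=
    fun z hz => ne_of_gt (lt_of_lt_of_le hc₃ (hhlb z hz))
  have hconstZ : ∀ c : ℝ, IntegrableOn (fun _ => c) (eZ d) (volume) :=
    fun c => integrableOn_const volume_eZ_lt_top.ne
  have hAint : ∀ k, IntegrableOn (A k) (eZ d) := by
    intro k
    apply Integrable.mono' (hconstZ c₁)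
    · exact (hAcont k).aestronglyMeasurable measurableSet_eZ
    · exact (ae_restrict_iff' measurableSet_eZ).2 (Filter.Eventually.of_forall
        fun z hz => by rw [Real.norm_eq_abs]; exact holder_abs_le (hA k) hz)
  have hAintR : ∀ k m, IntegrableOn (A k) (R m) := fun k m => (hAint k).mono_set (hRsub m)
  have hhintR : ∀ m, IntegrableOn (fun z => ∑ k', A k' z) (R m) := by
    intro m
    exact integrable_finset_sum _ (fun k' _ => hAintR k' m)
  have hvolfin : ∀ m, volume (R m) < ∞ :=
    fun m => lt_of_le_of_lt (measure_mono (hRsub m)) volume_eZ_lt_top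
  have hconstR : ∀ (c : ℝ) m, IntegrableOn (fun _ => c) (R m) :=
    fun c m => integrableOn_const (hvolfin m).ne
  have hFcont : ∀ k ℓ, ContinuousOn (fun z => A k z * A ℓ z / ∑ k', A k' z) (eZ d) :=
    fun k ℓ => ((hAcont k).mul (hAcont ℓ)).div hhcont hhne
  have hFint : ∀ k ℓ, IntegrableOn (fun z => A k z * A ℓ z / ∑ k', A k' z) (eZ d) := by
    intro k ℓ
    apply Integrable.mono' (hconstZ (c₁ * c₁ / c₃))
    · exact (hFcont k ℓ).aestronglyMeasurable measurableSet_eZ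
    · apply (ae_restrict_iff' measurableSet_eZ).2 (Filter.Eventually.of_forall ?_)
      intro z hz
      rw [Real.norm_eq_abs]
      have h1 : 0 ≤ A k z * A ℓ z / ∑ k', A k' z :=
        div_nonneg (mul_nonneg (hA0 k z hz) (hA0 ℓ z hz)) (le_trans hc₃.le (hhlb z hz))
      rw [abs_of_nonneg h1]
      exact div_le_div₀ (by positivity)
        (mul_le_mul (hAbd k z hz) (hAbd ℓ z hz) (hA0 ℓ z hz) hc₁.le) hc₃ (hhlb z hz)
  have hsplit : ∀ k ℓ, (∫ z in eZ d, A k z * A ℓ z / ∑ k', A k' z)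
      = ∑ m, ∫ z in R m, A k z * A ℓ z / ∑ k', A k' z := by
    intro k ℓ
    rw [← hRunion, integral_iUnion hRmeas hRdisj (by rw [hRunion]; exact hFint k ℓ),
      tsum_fintype]
  have hvolsum : ∑ m, (volume (R m)).toReal = Vd := by
    rw [← ENNReal.toReal_sum (fun m _ => (hvolfin m).ne), ← tsum_fintype (L := SummationFilter.unconditional _),
      ← measure_iUnion hRdisj hRmeas, hRunion]
  set ω : ℝ := c₁ * D ^ min β 1 with hω
  have hω0 : 0 ≤ ω := mul_nonneg hc₁.le (Real.rpow_nonneg hD _)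
  set B : ℝ := 2 * c₁ * ω / c₃ + c₁ ^ 2 * (K * ω) / c₃ ^ 2 with hB
  have hB0 : 0 ≤ B := by positivity
  have key : ∀ k ℓ m, |(∫ z in R m, A k z) * (∫ z in R m, A ℓ z) /
      (∫ z in R m, ∑ k', A k' z) - ∫ z in R m, A k z * A ℓ z / ∑ k', A k' z|
      ≤ 2 * B * (volume (R m)).toReal := by
    intro k ℓ m
    have hne : (R m).Nonempty := by
      rcases Set.eq_empty_or_nonempty (R m) with he | hne
      · exfalso
        have := hRvol m
        rw [he] at this
        simp at this
      · exact hne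
    obtain ⟨z₀, hz₀⟩ := hne
    have hz₀Z : z₀ ∈ eZ d := hRsub m hz₀
    have hV0 : 0 < (volume (R m)).toReal := hRvol m
    set V : ℝ := (volume (R m)).toReal with hV
    have hbounded : Bornology.IsBounded (R m) :=
      Metric.isBounded_closedBall.subset ((hRsub m).trans eZ_subset_ball)
    have hosc : ∀ k', ∀ z ∈ R m, |A k' z - A k' z₀| ≤ ω := by
      intro k' z hz
      apply holder_osc hβ hc₁ (hA k') hD (hRsub m hz) hz₀Z
      calc ‖z - z₀‖ = dist z z₀ := (dist_eq_norm _ _).symm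
        _ ≤ Metric.diam (R m) := Metric.dist_le_diam_of_mem hbounded hz hz₀
        _ ≤ D := hRdiam m
    have hosch : ∀ z ∈ R m, |(∑ k', A k' z) - ∑ k', A k' z₀| ≤ K * ω := by
      intro z hz
      rw [← Finset.sum_sub_distrib]
      calc |∑ k', (A k' z - A k' z₀)| ≤ ∑ k', |A k' z - A k' z₀| :=
            Finset.abs_sum_le_sum_abs _ _
        _ ≤ ∑ _k' : Fin K, ω := Finset.sum_le_sum fun k' _ => hosc k' z hz
        _ = K * ω := by rw [Finset.sum_const, Finset.card_univ, Fintype.card_fin,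
            nsmul_eq_mul]
    have hIlb : ∀ k', 0 ≤ ∫ z in R m, A k' z :=
      fun k' => setIntegral_nonneg (hRmeas m) (fun z hz => hA0 k' z (hRsub m hz))
    have hIub : ∀ k', (∫ z in R m, A k' z) ≤ c₁ * V := by
      intro k'
      calc (∫ z in R m, A k' z) ≤ ∫ _z in R m, c₁ :=
            setIntegral_mono_on (hAintR k' m) (hconstR c₁ m) (hRmeas m)
              (fun z hz => hAbd k' z (hRsub m hz))
        _ = c₁ * V := by rw [setIntegral_const, smul_eq_mul, mul_comm]; rfl
    have hIclose : ∀ k', |(∫ z in R m, A k' z) - A k' z₀ * V| ≤ ω * V := by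
      intro k'
      have e : (∫ z in R m, A k' z) - A k' z₀ * V = ∫ z in R m, (A k' z - A k' z₀) := by
        rw [integral_sub (hAintR k' m) (hconstR (A k' z₀) m), setIntegral_const,
          smul_eq_mul, mul_comm]; rfl
      rw [e, ← Real.norm_eq_abs]
      apply norm_setIntegral_le_of_norm_le_const_ae' (hvolfin m)
      apply Filter.Eventually.of_forall
      intro z hz
      rw [Real.norm_eq_abs]
      exact hosc k' z hz
    have hJsum : (∫ z in R m, ∑ k', A k' z) = ∑ k', ∫ z in R m, A k' z :=
      integral_finset_sum _ (fun k' _ => hAintR k' m)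
    have hJlb : c₃ * V ≤ ∫ z in R m, ∑ k', A k' z := by
      calc c₃ * V = ∫ _z in R m, c₃ := by rw [setIntegral_const, smul_eq_mul, mul_comm]; rfl
        _ ≤ ∫ z in R m, ∑ k', A k' z :=
            setIntegral_mono_on (hconstR c₃ m) (hhintR m) (hRmeas m)
              (fun z hz => hhlb z (hRsub m hz))
    have hJpos : 0 < ∫ z in R m, ∑ k', A k' z := lt_of_lt_of_le (by positivity) hJlb
    have hJclose : |(∫ z in R m, ∑ k', A k' z) - (∑ k', A k' z₀) * V| ≤ K * ω * V := by
      have e : (∫ z in R m, ∑ k', A k' z) - (∑ k', A k' z₀) * V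
          = ∑ k', ((∫ z in R m, A k' z) - A k' z₀ * V) := by
        rw [hJsum, Finset.sum_sub_distrib, Finset.sum_mul]
      rw [e]
      calc |∑ k', ((∫ z in R m, A k' z) - A k' z₀ * V)|
          ≤ ∑ k', |(∫ z in R m, A k' z) - A k' z₀ * V| := Finset.abs_sum_le_sum_abs _ _
        _ ≤ ∑ _k' : Fin K, ω * V := Finset.sum_le_sum fun k' _ => hIclose k'
        _ = K * ω * V := by
            rw [Finset.sum_const, Finset.card_univ, Fintype.card_fin, nsmul_eq_mul]; ring
    have hAz₀bd : ∀ k', A k' z₀ ≤ c₁ := fun k' => hAbd k' z₀ hz₀Z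
    have hAz₀0 : ∀ k', 0 ≤ A k' z₀ := fun k' => hA0 k' z₀ hz₀Z
    have hhz₀ : c₃ ≤ ∑ k', A k' z₀ := hhlb z₀ hz₀Z
    -- middle quantity
    set midQ : ℝ := A k z₀ * A ℓ z₀ / (∑ k', A k' z₀) with hmidQ
    have hTclose : |(∫ z in R m, A k z * A ℓ z / ∑ k', A k' z) - midQ * V| ≤ B * V := by
      have e : (∫ z in R m, A k z * A ℓ z / ∑ k', A k' z) - midQ * V
          = ∫ z in R m, (A k z * A ℓ z / (∑ k', A k' z) - midQ) := by
        rw [integral_sub ((hFint k ℓ).mono_set (hRsub m)) (hconstR midQ m),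
          setIntegral_const, smul_eq_mul, mul_comm]; rfl
      rw [e, ← Real.norm_eq_abs]
      apply norm_setIntegral_le_of_norm_le_const_ae' (hvolfin m)
      apply Filter.Eventually.of_forall
      intro z hz
      rw [Real.norm_eq_abs, hmidQ, hB]
      have hzZ : z ∈ eZ d := hRsub m hz
      exact quot_bound hc₃ (hA0 k z hzZ) (hAbd k z hzZ) (hA0 ℓ z hzZ) (hAbd ℓ z hzZ)
        (hAz₀0 k) (hAz₀bd k) (hAz₀0 ℓ) (hAz₀bd ℓ) (hhlb z hzZ) hhz₀
        (hosc k z hz) (hosc ℓ z hz) (hosch z hz)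
    have hmain : |(∫ z in R m, A k z) * (∫ z in R m, A ℓ z) /
        (∫ z in R m, ∑ k', A k' z) - midQ * V| ≤ B * V := by
      have e : (∫ z in R m, A k z) * (∫ z in R m, A ℓ z) / (∫ z in R m, ∑ k', A k' z)
          = (((∫ z in R m, A k z) / V) * ((∫ z in R m, A ℓ z) / V) /
            ((∫ z in R m, ∑ k', A k' z) / V)) * V := by
        field_simp
      rw [e]
      have hq : |((∫ z in R m, A k z) / V) * ((∫ z in R m, A ℓ z) / V) /
          ((∫ z in R m, ∑ k', A k' z) / V) - midQ| ≤ B := by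
        rw [hmidQ, hB]
        apply quot_bound hc₃ (div_nonneg (hIlb k) hV0.le)
          ((div_le_iff₀ hV0).2 (by rw [mul_comm] at *; exact hIub k))
          (div_nonneg (hIlb ℓ) hV0.le)
          ((div_le_iff₀ hV0).2 (by rw [mul_comm] at *; exact hIub ℓ))
          (hAz₀0 k) (hAz₀bd k) (hAz₀0 ℓ) (hAz₀bd ℓ)
          ((le_div_iff₀ hV0).2 hJlb) hhz₀
        · rw [div_sub' (ne_of_gt hV0), abs_div, abs_of_pos hV0, div_le_iff₀ hV0]
          simpa [mul_comm] using hIclose k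
        · rw [div_sub' (ne_of_gt hV0), abs_div, abs_of_pos hV0, div_le_iff₀ hV0]
          simpa [mul_comm] using hIclose ℓ
        · rw [div_sub' (ne_of_gt hV0), abs_div, abs_of_pos hV0, div_le_iff₀ hV0]
          simpa [mul_comm] using hJclose
      calc |(((∫ z in R m, A k z) / V) * ((∫ z in R m, A ℓ z) / V) /
            ((∫ z in R m, ∑ k', A k' z) / V)) * V - midQ * V|
          = |((∫ z in R m, A k z) / V) * ((∫ z in R m, A ℓ z) / V) /
            ((∫ z in R m, ∑ k', A k' z) / V) - midQ| * V := by
            rw [← sub_mul, abs_mul, abs_of_pos hV0]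
        _ ≤ B * V := mul_le_mul_of_nonneg_right hq hV0.le
    calc |(∫ z in R m, A k z) * (∫ z in R m, A ℓ z) /
        (∫ z in R m, ∑ k', A k' z) - ∫ z in R m, A k z * A ℓ z / ∑ k', A k' z|
        ≤ |(∫ z in R m, A k z) * (∫ z in R m, A ℓ z) /
            (∫ z in R m, ∑ k', A k' z) - midQ * V| +
          |midQ * V - ∫ z in R m, A k z * A ℓ z / ∑ k', A k' z| := abs_sub_le _ _ _
      _ ≤ B * V + B * V := by
          apply add_le_add hmain
          rw [abs_sub_comm]
          exact hTclose
      _ = 2 * B * V := by ring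
  have entry : ∀ k ℓ, |(∑ m, (∫ z in R m, A k z) * (∫ z in R m, A ℓ z) /
      ∫ z in R m, ∑ k', A k' z) - ∫ z in eZ d, A k z * A ℓ z / ∑ k', A k' z|
      ≤ (C0 + 1) * D ^ min β 1 := by
    intro k ℓ
    rw [hsplit k ℓ, ← Finset.sum_sub_distrib]
    calc |∑ m, ((∫ z in R m, A k z) * (∫ z in R m, A ℓ z) /
          (∫ z in R m, ∑ k', A k' z) - ∫ z in R m, A k z * A ℓ z / ∑ k', A k' z)|
        ≤ ∑ m, |(∫ z in R m, A k z) * (∫ z in R m, A ℓ z) /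
          (∫ z in R m, ∑ k', A k' z) - ∫ z in R m, A k z * A ℓ z / ∑ k', A k' z| :=
          Finset.abs_sum_le_sum_abs _ _
      _ ≤ ∑ m, 2 * B * (volume (R m)).toReal := Finset.sum_le_sum fun m _ => key k ℓ m
      _ = 2 * B * Vd := by rw [← Finset.mul_sum, hvolsum]
      _ = C0 * D ^ min β 1 := by rw [hC0, hB, hω]; ring
      _ ≤ (C0 + 1) * D ^ min β 1 := by
          apply mul_le_mul_of_nonneg_right (by linarith) (Real.rpow_nonneg hD _)
  refine ⟨entry, ?_⟩
  have hop := opNorm_aux (Matrix.of fun k ℓ : Fin K =>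
      (∑ m, (∫ z in R m, A k z) * (∫ z in R m, A ℓ z) /
        ∫ z in R m, ∑ k', A k' z) - ∫ z in eZ d, A k z * A ℓ z / ∑ k', A k' z)
    (ε := (C0 + 1) * D ^ min β 1)
    (by positivity)
    (fun k ℓ => entry k ℓ)
  calc ‖LinearMap.toContinuousLinearMap (Matrix.toEuclideanLin
        (Matrix.of fun k ℓ : Fin K =>
          (∑ m, (∫ z in R m, A k z) * (∫ z in R m, A ℓ z) /
              ∫ z in R m, ∑ k', A k' z) -
            ∫ z in eZ d, A k z * A ℓ z / ∑ k', A k' z))‖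
      ≤ K * ((C0 + 1) * D ^ min β 1) := hop
    _ = (C0 + 1) * K * D ^ min β 1 := by ring
end

section
/- Let Ψ₀(z) = exp(1/(z² − 1)) for |z| < 1 and Ψ₀(z) = 0 for |z| ≥ 1. Fix an integer d ≥ 1 and a real β > 0, and set p = ⌊β⌋ (the largest integer strictly smaller than β). For an integer m ≥ 1 set h = 1/m and x_j = (2j − m − 1)/m for 1 ≤ j ≤ m, and for each multi-index j⃗ = (j₁, …, j_d) ∈ {1, …, m}^d define the scaled product bump φ_{j⃗}(z) = h^β ∏_{r=1}^{d} Ψ₀( (z_r − x_{j_r}) / h ) on ℝ^d. Then there exists a constant C > 0, depending only on (β, d) and not on m, such that for every ω ∈ {0,1}^{m^d}, the function f = Σ_{j⃗} ω_{j⃗} φ_{j⃗} is p times continuously differentiable on ℝ^d, all its partial derivatives of order at most p are bounded in absolute value by C, and every order-p partial derivative D^γ f satisfies |D^γ f(x) − D^γ f(y)| ≤ C ‖x − y‖^{β−p} for all x, y ∈ ℝ^d; that is, f is β-Hölder smooth with constant C on ℝ^d, uniformly over m and ω. -/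
open scoped BigOperators

/-- The standard `C^∞` bump function `Ψ₀(z) = exp(1/(z² − 1))` for `|z| < 1`, `0` else. -/
noncomputable def bump0 (z : ℝ) : ℝ := if |z| < 1 then Real.exp (1 / (z ^ 2 - 1)) else 0

lemma bump0_eq (z : ℝ) : bump0 z = expNegInvGlue (1 - z ^ 2) := by
  unfold bump0 expNegInvGlue
  rcases lt_or_ge (|z|) 1 with h | h
  · rw [if_pos h, if_neg (by nlinarith [abs_nonneg z, sq_abs z])]
    congr 1
    rw [neg_inv]
    ring_nf
  · rw [if_neg (not_lt.2 h), if_pos (by nlinarith [sq_abs z])]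

lemma bump0_contDiff : ContDiff ℝ ((⊤ : ℕ∞) : WithTop ℕ∞) bump0 := by
  have : bump0 = fun z => expNegInvGlue (1 - z ^ 2) := funext bump0_eq
  rw [this]
  exact expNegInvGlue.contDiff.comp (contDiff_const.sub (contDiff_id.pow 2))

lemma bump0_zero {z : ℝ} (h : 1 ≤ |z|) : bump0 z = 0 := by
  rw [bump0, if_neg (not_lt.2 h)]

section aux
variable {E F : Type*} [NormedAddCommGroup E] [NormedSpace ℝ E]
  [NormedAddCommGroup F] [NormedSpace ℝ F]

lemma iteratedFDeriv_comp_add (f : E → F) (hf : ContDiff ℝ ((⊤ : ℕ∞) : WithTop ℕ∞) f) (a : E)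
    (n : ℕ) :
    (iteratedFDeriv ℝ n fun z => f (z + a)) = fun x => iteratedFDeriv ℝ n f (x + a) := by
  induction n with
  | zero => funext x; ext m; simp
  | succ n IH =>
    funext x
    rw [iteratedFDeriv_succ_eq_comp_left, iteratedFDeriv_succ_eq_comp_left]
    simp only [Function.comp_apply]
    congr 1
    rw [IH]
    have hdiff : DifferentiableAt ℝ (iteratedFDeriv ℝ n f) (x + a) :=
      (hf.differentiable_iteratedFDeriv
        (by exact_mod_cast lt_top_iff_ne_top.2 (by simp))).differentiableAt
    have h1 : HasFDerivAt (fun z : E => z + a) (ContinuousLinearMap.id ℝ E) x :=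
      (hasFDerivAt_id x).add_const a
    have := (hdiff.hasFDerivAt.comp x h1).fderiv
    rw [ContinuousLinearMap.comp_id] at this
    exact this

lemma iteratedFDeriv_eq_zero_of_eventually (f : E → F) {x : E} (n : ℕ)
    (hev : ∀ᶠ z in nhds x, f z = 0) : iteratedFDeriv ℝ n f x = 0 := by
  have : iteratedFDeriv ℝ n f x = iteratedFDeriv ℝ n (fun _ => (0 : F)) x := by
    rw [← iteratedFDerivWithin_univ, ← iteratedFDerivWithin_univ]
    apply Filter.EventuallyEq.iteratedFDerivWithin_eq
    · rw [nhdsWithin_univ]; exact hev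
    · exact hev.self_of_nhds
  rw [this, iteratedFDeriv_zero_fun, Pi.zero_apply]

end aux


set_option maxHeartbeats 2000000 in
/-- Uniform Hölder regularity of `{0,1}`-combinations of disjointly supported scaled
bumps: with `h = 1/m`, `x_j = (2j − m − 1)/m` and
`φ_{j⃗}(z) = h^β ∏_r Ψ₀((z_r − x_{j_r})/h)`, there is `C` depending only on `(β, d)`
such that for every `m ≥ 1` and every `ω ∈ {0,1}^{m^d}`, the function
`f = ∑_{j⃗} ω_{j⃗} φ_{j⃗}` is β-Hölder smooth on `ℝ^d` with constant `C`:
it is `p = ⌊β⌋` times continuously differentiable, all derivatives of order `≤ p` are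
bounded by `C`, and the order-`p` derivative is `(β−p)`-Hölder with constant `C`. -/
theorem stmt13 (d : ℕ) (hd : 1 ≤ d) (β : ℝ) (hβ : 0 < β) :
    ∃ C : ℝ, 0 < C ∧
      ∀ m : ℕ, 1 ≤ m →
        ∀ ω : (Fin d → Fin m) → ℝ, (∀ j, ω j = 0 ∨ ω j = 1) →
          let f : EuclideanSpace ℝ (Fin d) → ℝ := fun z =>
            ∑ j : Fin d → Fin m, ω j *
              (((m : ℝ)⁻¹) ^ β *
                ∏ r, bump0 ((z r - (2 * ((j r : ℕ) : ℝ) + 1 - (m : ℝ)) / m) * m))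
          ContDiff ℝ (⌈β⌉₊ - 1 : ℕ) f ∧
            (∀ i : ℕ, i ≤ ⌈β⌉₊ - 1 → ∀ x, ‖iteratedFDeriv ℝ i f x‖ ≤ C) ∧
            ∀ x y, ‖iteratedFDeriv ℝ (⌈β⌉₊ - 1) f x - iteratedFDeriv ℝ (⌈β⌉₊ - 1) f y‖ ≤
              C * ‖x - y‖ ^ (β - (⌈β⌉₊ - 1 : ℕ)) := by
  classical
  set p : ℕ := ⌈β⌉₊ - 1 with hp
  have hceil : ⌈β⌉₊ = p + 1 := (Nat.succ_pred_eq_of_pos (Nat.one_le_ceil_iff.2 hβ)).symm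
  have hpβ : (p : ℝ) < β := by
    have h1 : (⌈β⌉₊ : ℝ) < β + 1 := Nat.ceil_lt_add_one hβ.le
    have h2 : ((p : ℝ)) = (⌈β⌉₊ : ℝ) - 1 := by rw [hceil]; push_cast; ring
    linarith
  have hβp : β ≤ (p : ℝ) + 1 := by
    have h1 := Nat.le_ceil β
    rw [hceil] at h1; push_cast at h1; linarith
  set Φ : EuclideanSpace ℝ (Fin d) → ℝ := fun u => ∏ r, bump0 (u r) with hΦdef
  have hΦ : ContDiff ℝ ((⊤ : ℕ∞) : WithTop ℕ∞) Φ :=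
    contDiff_prod fun r _ => bump0_contDiff.comp (by exact (EuclideanSpace.proj (𝕜 := ℝ) r).contDiff)
  have hΦsupp : HasCompactSupport Φ := by
    apply HasCompactSupport.intro
      (isCompact_closedBall (0 : EuclideanSpace ℝ (Fin d)) ((d : ℝ) + 1))
    intro u hu
    by_contra hne
    apply hu
    simp only [Metric.mem_closedBall, dist_zero_right]
    have hco : ∀ r, ‖u r‖ ≤ 1 := by
      intro r
      by_contra hr
      exact hne (Finset.prod_eq_zero (Finset.mem_univ r)
        (bump0_zero (by rw [← Real.norm_eq_abs]; linarith [not_le.1 hr])))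
    rw [EuclideanSpace.norm_eq]
    have hsum : (∑ r, ‖u r‖ ^ 2) ≤ ((d : ℝ) + 1) ^ 2 := by
      calc (∑ r, ‖u r‖ ^ 2) ≤ ∑ _r : Fin d, (1 : ℝ) := by
            apply Finset.sum_le_sum
            intro r _
            nlinarith [hco r, norm_nonneg (u r)]
        _ = (d : ℝ) := by simp
        _ ≤ ((d : ℝ) + 1) ^ 2 := by nlinarith [Nat.cast_nonneg (α := ℝ) d]
    calc Real.sqrt (∑ r, ‖u r‖ ^ 2) ≤ Real.sqrt (((d : ℝ) + 1) ^ 2) :=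
          Real.sqrt_le_sqrt hsum
      _ = (d : ℝ) + 1 := Real.sqrt_sq (by positivity)
  -- uniform bounds on derivatives of Φ
  have hbd : ∀ i : ℕ, ∃ Ci : ℝ, ∀ u, ‖iteratedFDeriv ℝ i Φ u‖ ≤ Ci := fun i =>
    (hΦsupp.iteratedFDeriv i).exists_bound_of_continuous
      (hΦ.continuous_iteratedFDeriv (by exact_mod_cast le_top))
  choose Cb hCb using hbd
  set D : ℝ := 1 + ∑ i ∈ Finset.range (p + 2), |Cb i| with hDdef
  have hD1 : 1 ≤ D := by
    rw [hDdef]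
    have : (0 : ℝ) ≤ ∑ i ∈ Finset.range (p + 2), |Cb i| :=
      Finset.sum_nonneg fun i _ => abs_nonneg _
    linarith
  have hD0 : 0 ≤ D := le_trans zero_le_one hD1
  have hDbound : ∀ i : ℕ, i ≤ p + 1 → ∀ u, ‖iteratedFDeriv ℝ i Φ u‖ ≤ D := by
    intro i hi u
    calc ‖iteratedFDeriv ℝ i Φ u‖ ≤ Cb i := hCb i u
      _ ≤ |Cb i| := le_abs_self _
      _ ≤ ∑ k ∈ Finset.range (p + 2), |Cb k| :=
          Finset.single_le_sum (fun k _ => abs_nonneg (Cb k))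
            (Finset.mem_range.2 (by omega))
      _ ≤ D := by rw [hDdef]; linarith
  refine ⟨2 ^ (d + 1) * D, by positivity, ?_⟩
  intro m hm ω hω f
  have hm0 : (0:ℝ) < m := by exact_mod_cast hm
  have hm1 : (1:ℝ) ≤ m := by exact_mod_cast hm
  have hh0 : (0:ℝ) < (m:ℝ)⁻¹ := by positivity
  have hh1 : (m:ℝ)⁻¹ ≤ 1 := by
    rw [inv_le_one_iff₀]; right; exact hm1
  set A : EuclideanSpace ℝ (Fin d) →L[ℝ] EuclideanSpace ℝ (Fin d) :=
    (m:ℝ) • ContinuousLinearMap.id ℝ _ with hA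
  set c : (Fin d → Fin m) → EuclideanSpace ℝ (Fin d) :=
    fun j => WithLp.toLp 2 ((fun r => (2 * ((j r : ℕ) : ℝ) + 1 - m) : Fin d → ℝ)) with hc
  have hAc : ∀ (j) (z : EuclideanSpace ℝ (Fin d)) (r),
      (A z + -(c j)) r = (m:ℝ) * z r - (2 * ((j r : ℕ) : ℝ) + 1 - m) := by
    intro j z r
    have h1 : (A z + -(c j)) r = A z r + -(c j r) := rfl
    rw [h1]
    have h2 : A z r = (m:ℝ) * z r := rfl
    rw [h2, show c j r = (2 * ((j r : ℕ) : ℝ) + 1 - m) from rfl]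
    ring
  set ψ : (Fin d → Fin m) → EuclideanSpace ℝ (Fin d) → ℝ :=
    fun j => (ω j * (m:ℝ)⁻¹ ^ β) • ((fun w => Φ (w + -(c j))) ∘ A) with hψdef
  have hfψ : f = fun z => ∑ j, ψ j z := by
    funext z
    show (∑ j : Fin d → Fin m, ω j *
        (((m : ℝ)⁻¹) ^ β *
          ∏ r, bump0 ((z r - (2 * ((j r : ℕ) : ℝ) + 1 - (m : ℝ)) / m) * m))) = _
    apply Finset.sum_congr rfl
    intro j _
    simp only [hψdef, Pi.smul_apply, Function.comp_apply, smul_eq_mul, hΦdef]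
    rw [mul_assoc]
    congr 1
    congr 1
    apply Finset.prod_congr rfl
    intro r _
    congr 1
    rw [hAc j z r]
    field_simp
  have hinner : ∀ j, ContDiff ℝ ((⊤ : ℕ∞) : WithTop ℕ∞) (fun w => Φ (w + -(c j))) :=
    fun j => hΦ.comp (contDiff_id.add contDiff_const)
  have hψs : ∀ j, ContDiff ℝ ((⊤ : ℕ∞) : WithTop ℕ∞) (ψ j) := by
    intro j
    rw [hψdef]
    exact ContDiff.const_smul (R := ℝ) _ ((hinner j).comp A.contDiff)
  have hωj : ∀ j, |ω j| ≤ 1 := by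
    intro j; rcases hω j with h | h <;> simp [h]
  have hAnorm : ‖A‖ ≤ (m:ℝ) := by
    apply ContinuousLinearMap.opNorm_le_bound _ hm0.le
    intro x
    have : A x = (m:ℝ) • x := rfl
    rw [this, norm_smul, Real.norm_eq_abs, abs_of_pos hm0]
  have hpowmul : ∀ i : ℕ, (m:ℝ)⁻¹ ^ β * (m:ℝ) ^ i = (m:ℝ)⁻¹ ^ (β - i) := by
    intro i
    have h1 : ((m:ℝ)⁻¹) ^ (-(i:ℝ)) = (m:ℝ) ^ i := by
      rw [Real.rpow_neg hh0.le, Real.inv_rpow hm0.le, inv_inv, Real.rpow_natCast]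
    rw [← h1, ← Real.rpow_add hh0, sub_eq_add_neg]
  have hψbound : ∀ i : ℕ, i ≤ p + 1 → ∀ j z,
      ‖iteratedFDeriv ℝ i (ψ j) z‖ ≤ (m:ℝ)⁻¹ ^ (β - i) * D := by
    intro i hi j z
    have e1 : iteratedFDeriv ℝ i (ψ j) z
        = (ω j * (m:ℝ)⁻¹ ^ β) • iteratedFDeriv ℝ i ((fun w => Φ (w + -(c j))) ∘ A) z := by
      rw [hψdef]
      exact iteratedFDeriv_const_smul_apply
        (((hinner j).comp A.contDiff).contDiffAt.of_le (by exact_mod_cast (le_top : (i:ℕ∞) ≤ ⊤)))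
    have e2 : iteratedFDeriv ℝ i ((fun w => Φ (w + -(c j))) ∘ A) z
        = (iteratedFDeriv ℝ i (fun w => Φ (w + -(c j))) (A z)).compContinuousLinearMap
            (fun _ => A) :=
      A.iteratedFDeriv_comp_right (hinner j) z (by exact_mod_cast le_top)
    have e3 : iteratedFDeriv ℝ i (fun w => Φ (w + -(c j))) (A z)
        = iteratedFDeriv ℝ i Φ (A z + -(c j)) := by
      rw [iteratedFDeriv_comp_add Φ hΦ (-(c j)) i]
    rw [e1, e2, e3, norm_smul]
    calc ‖ω j * (m:ℝ)⁻¹ ^ β‖ *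
          ‖(iteratedFDeriv ℝ i Φ (A z + -(c j))).compContinuousLinearMap (fun _ => A)‖
        ≤ ((m:ℝ)⁻¹ ^ β) * (D * (m:ℝ) ^ i) := by
          apply mul_le_mul
          · rw [Real.norm_eq_abs, abs_mul]
            calc |ω j| * |(m:ℝ)⁻¹ ^ β| ≤ 1 * |(m:ℝ)⁻¹ ^ β| :=
                  mul_le_mul_of_nonneg_right (hωj j) (abs_nonneg _)
              _ = (m:ℝ)⁻¹ ^ β := by
                  rw [one_mul, abs_of_nonneg (Real.rpow_nonneg hh0.le _)]
          · calc ‖(iteratedFDeriv ℝ i Φ (A z + -(c j))).compContinuousLinearMap (fun _ => A)‖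
                ≤ ‖iteratedFDeriv ℝ i Φ (A z + -(c j))‖ * ∏ _r : Fin i, ‖A‖ :=
                  ContinuousMultilinearMap.norm_compContinuousLinearMap_le _ _
              _ ≤ D * (m:ℝ) ^ i := by
                  apply mul_le_mul (hDbound i hi _)
                  · rw [Finset.prod_const]
                    simp only [Finset.card_univ, Fintype.card_fin]
                    exact pow_le_pow_left₀ (norm_nonneg A) hAnorm i
                  · exact Finset.prod_nonneg fun _ _ => norm_nonneg _
                  · exact hD0
          · exact norm_nonneg _
          · exact Real.rpow_nonneg hh0.le _
      _ = (m:ℝ)⁻¹ ^ (β - i) * D := by rw [← hpowmul i]; ring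
  have hvanish : ∀ (i : ℕ) (x : EuclideanSpace ℝ (Fin d)) (j : Fin d → Fin m),
      (∃ r, 1 < |(m:ℝ) * x r - (2 * ((j r : ℕ) : ℝ) + 1 - m)|) →
      iteratedFDeriv ℝ i (ψ j) x = 0 := by
    rintro i x j ⟨r, hr⟩
    apply iteratedFDeriv_eq_zero_of_eventually
    have hcont : Continuous fun z : EuclideanSpace ℝ (Fin d) =>
        |(m:ℝ) * z r - (2 * ((j r : ℕ) : ℝ) + 1 - m)| :=
      ((continuous_const.mul (EuclideanSpace.proj (𝕜 := ℝ) r).continuous).sub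
        continuous_const).abs
    have h2 : ∀ᶠ z in nhds x, 1 < |(m:ℝ) * z r - (2 * ((j r : ℕ) : ℝ) + 1 - m)| :=
      (hcont.continuousAt (x := x)).eventually (eventually_gt_nhds hr)
    filter_upwards [h2] with z hz
    have hzero : Φ (A z + -(c j)) = 0 := by
      apply Finset.prod_eq_zero (Finset.mem_univ r)
      apply bump0_zero
      rw [hAc j z r]
      exact hz.le
    show (ω j * (m:ℝ)⁻¹ ^ β) • Φ (A z + -(c j)) = 0
    rw [hzero, smul_zero]
  have hcard : ∀ x : EuclideanSpace ℝ (Fin d),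
      (Finset.univ.filter fun j : Fin d → Fin m =>
        ∀ r, |(m:ℝ) * x r - (2 * ((j r : ℕ) : ℝ) + 1 - m)| ≤ 1).card ≤ 2 ^ d := by
    intro x
    set T : Fin d → Finset (Fin m) := fun r =>
      Finset.univ.filter fun a : Fin m => |(m:ℝ) * x r - (2 * ((a : ℕ) : ℝ) + 1 - m)| ≤ 1
      with hT
    have hsub : (Finset.univ.filter fun j : Fin d → Fin m =>
        ∀ r, |(m:ℝ) * x r - (2 * ((j r : ℕ) : ℝ) + 1 - m)| ≤ 1) ⊆ Fintype.piFinset T := by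
      intro j hj
      rw [Fintype.mem_piFinset]
      intro r
      rw [hT]
      simp only [Finset.mem_filter, Finset.mem_univ, true_and]
      exact (Finset.mem_filter.1 hj).2 r
    have hTcard : ∀ r, (T r).card ≤ 2 := by
      intro r
      by_contra hgt
      push_neg at hgt
      obtain ⟨a, b, e, ha, hb, he, hab, hae, hbe⟩ := Finset.two_lt_card_iff.1 hgt
      have key : ∀ u v : Fin m, u ∈ T r → v ∈ T r → (u : ℕ) ≤ (v : ℕ) + 1 := by
        intro u v hu hv
        rw [hT] at hu hv
        simp only [Finset.mem_filter, Finset.mem_univ, true_and] at hu hv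
        rw [abs_le] at hu hv
        have : ((u : ℕ) : ℝ) ≤ ((v : ℕ) : ℝ) + 1 := by linarith
        exact_mod_cast this
      have h1 := key a b ha hb
      have h2 := key b a hb ha
      have h3 := key a e ha he
      have h4 := key e a he ha
      have h5 := key b e hb he
      have h6 := key e b he hb
      have n1 : (a : ℕ) ≠ (b : ℕ) := fun hh => hab (Fin.ext hh)
      have n2 : (a : ℕ) ≠ (e : ℕ) := fun hh => hae (Fin.ext hh)
      have n3 : (b : ℕ) ≠ (e : ℕ) := fun hh => hbe (Fin.ext hh)
      omega
    calc (Finset.univ.filter fun j : Fin d → Fin m =>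
          ∀ r, |(m:ℝ) * x r - (2 * ((j r : ℕ) : ℝ) + 1 - m)| ≤ 1).card
        ≤ (Fintype.piFinset T).card := Finset.card_le_card hsub
      _ = ∏ r, (T r).card := Fintype.card_piFinset T
      _ ≤ ∏ _r : Fin d, 2 := Finset.prod_le_prod' fun r _ => hTcard r
      _ = 2 ^ d := by rw [Finset.prod_const, Finset.card_univ, Fintype.card_fin]
  have hfsum : ∀ i : ℕ, ∀ x, iteratedFDeriv ℝ i f x = ∑ j, iteratedFDeriv ℝ i (ψ j) x := by
    intro i x
    rw [hfψ, iteratedFDeriv_sum fun j _ => (hψs j).of_le (by exact_mod_cast le_top)]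
    rw [Finset.sum_apply]
  have hfd : ∀ i : ℕ, i ≤ p + 1 → ∀ x,
      ‖iteratedFDeriv ℝ i f x‖ ≤ 2 ^ d * ((m:ℝ)⁻¹ ^ (β - i) * D) := by
    intro i hi x
    rw [hfsum i x]
    set S := Finset.univ.filter fun j : Fin d → Fin m =>
      ∀ r, |(m:ℝ) * x r - (2 * ((j r : ℕ) : ℝ) + 1 - m)| ≤ 1 with hS
    have hzero : ∀ j ∈ Finset.univ, j ∉ S → iteratedFDeriv ℝ i (ψ j) x = 0 := by
      intro j _ hj
      apply hvanish i x j
      rw [hS] at hj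
      simp only [Finset.mem_filter, Finset.mem_univ, true_and, not_forall, not_le] at hj
      obtain ⟨r, hr⟩ := hj
      exact ⟨r, hr⟩
    rw [← Finset.sum_subset (Finset.subset_univ S) hzero]
    calc ‖∑ j ∈ S, iteratedFDeriv ℝ i (ψ j) x‖
        ≤ ∑ j ∈ S, ‖iteratedFDeriv ℝ i (ψ j) x‖ := norm_sum_le _ _
      _ ≤ S.card • ((m:ℝ)⁻¹ ^ (β - i) * D) :=
          Finset.sum_le_card_nsmul _ _ _ fun j _ => hψbound i hi j x
      _ = (S.card : ℝ) * ((m:ℝ)⁻¹ ^ (β - i) * D) := nsmul_eq_mul _ _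
      _ ≤ 2 ^ d * ((m:ℝ)⁻¹ ^ (β - i) * D) := by
          apply mul_le_mul_of_nonneg_right _ (by positivity)
          calc (S.card : ℝ) ≤ ((2 ^ d : ℕ) : ℝ) := Nat.cast_le.2 (hcard x)
            _ = 2 ^ d := by push_cast; ring
  have hfsmooth : ContDiff ℝ ((⊤ : ℕ∞) : WithTop ℕ∞) f := by
    rw [hfψ]; exact ContDiff.sum fun j _ => hψs j
  have hexp_le_one : ∀ i : ℕ, i ≤ p → (m:ℝ)⁻¹ ^ (β - i) ≤ 1 := by
    intro i hi
    apply Real.rpow_le_one hh0.le hh1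
    have : (i:ℝ) ≤ (p:ℝ) := by exact_mod_cast hi
    linarith
  have hpow2 : (0:ℝ) < 2 ^ d := by positivity
  refine ⟨?_, ?_, ?_⟩
  · exact hfsmooth.of_le (by exact_mod_cast le_top)
  · intro i hi x
    calc ‖iteratedFDeriv ℝ i f x‖ ≤ 2 ^ d * ((m:ℝ)⁻¹ ^ (β - i) * D) := hfd i (by omega) x
      _ ≤ 2 ^ d * (1 * D) := by
          apply mul_le_mul_of_nonneg_left _ hpow2.le
          exact mul_le_mul_of_nonneg_right (hexp_le_one i hi) hD0
      _ = 2 ^ d * D := by ring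
      _ ≤ 2 ^ (d+1) * D := by
          apply mul_le_mul_of_nonneg_right _ hD0
          exact pow_le_pow_right₀ one_le_two (Nat.le_succ d)
  · intro x y
    set α : ℝ := β - (p:ℝ) with hαdef
    have hα0 : 0 < α := by rw [hαdef]; linarith
    have hα1 : α ≤ 1 := by rw [hαdef]; linarith
    by_cases hxy : x = y
    · subst hxy
      simp only [sub_self, norm_zero]
      positivity
    have ht0 : 0 < ‖x - y‖ := by
      rw [norm_pos_iff, sub_ne_zero]; exact hxy
    set t : ℝ := ‖x - y‖ with htdef
    rcases le_or_gt ((m:ℝ)⁻¹) t with hcase | hcase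
    · have hb1 := hfd p (Nat.le_succ p) x
      have hb2 := hfd p (Nat.le_succ p) y
      have hrl : (m:ℝ)⁻¹ ^ α ≤ t ^ α := Real.rpow_le_rpow hh0.le hcase hα0.le
      calc ‖iteratedFDeriv ℝ p f x - iteratedFDeriv ℝ p f y‖
          ≤ ‖iteratedFDeriv ℝ p f x‖ + ‖iteratedFDeriv ℝ p f y‖ := norm_sub_le _ _
        _ ≤ 2 ^ d * ((m:ℝ)⁻¹ ^ α * D) + 2 ^ d * ((m:ℝ)⁻¹ ^ α * D) := add_le_add hb1 hb2
        _ = 2 ^ (d+1) * D * (m:ℝ)⁻¹ ^ α := by rw [pow_succ]; ring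
        _ ≤ 2 ^ (d+1) * D * t ^ α := by
            apply mul_le_mul_of_nonneg_left hrl (by positivity)
    · have hM : ∀ z, ‖fderiv ℝ (iteratedFDeriv ℝ p f) z‖ ≤ 2 ^ d * ((m:ℝ)⁻¹ ^ (α - 1) * D) := by
        intro z
        rw [norm_fderiv_iteratedFDeriv]
        have h1 := hfd (p+1) le_rfl z
        have hexp : β - ((p+1 : ℕ):ℝ) = α - 1 := by rw [hαdef]; push_cast; ring
        rwa [hexp] at h1
      have hdiff : ∀ z ∈ Set.univ, DifferentiableAt ℝ (iteratedFDeriv ℝ p f) z := fun z _ =>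
        (hfsmooth.differentiable_iteratedFDeriv (by exact_mod_cast WithTop.coe_lt_top (p : ℕ))).differentiableAt
      have hmvt := Convex.norm_image_sub_le_of_norm_fderiv_le hdiff (fun z _ => hM z) convex_univ
        (Set.mem_univ y) (Set.mem_univ x)
      have k0 : t ^ (1 - α) * t ^ α = t := by
        rw [← Real.rpow_add ht0, show (1 - α + α) = 1 by ring, Real.rpow_one]
      have k2 : t ^ (1 - α) ≤ ((m:ℝ)⁻¹) ^ (1 - α) :=
        Real.rpow_le_rpow ht0.le hcase.le (by linarith)
      have k3 : (m:ℝ)⁻¹ ^ (α - 1) * (m:ℝ)⁻¹ ^ (1 - α) = 1 := by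
        rw [← Real.rpow_add hh0, show (α - 1 + (1 - α)) = 0 by ring, Real.rpow_zero]
      have e1 : (m:ℝ)⁻¹ ^ (α - 1) * t ≤ t ^ α := by
        calc (m:ℝ)⁻¹ ^ (α - 1) * t
            = ((m:ℝ)⁻¹ ^ (α - 1) * t ^ (1 - α)) * t ^ α := by rw [mul_assoc, k0]
          _ ≤ ((m:ℝ)⁻¹ ^ (α - 1) * (m:ℝ)⁻¹ ^ (1 - α)) * t ^ α := by
              apply mul_le_mul_of_nonneg_right _ (Real.rpow_nonneg ht0.le α)
              exact mul_le_mul_of_nonneg_left k2 (Real.rpow_nonneg hh0.le _)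
          _ = t ^ α := by rw [k3, one_mul]
      calc ‖iteratedFDeriv ℝ p f x - iteratedFDeriv ℝ p f y‖
          ≤ 2 ^ d * ((m:ℝ)⁻¹ ^ (α - 1) * D) * t := hmvt
        _ = 2 ^ d * D * ((m:ℝ)⁻¹ ^ (α - 1) * t) := by ring
        _ ≤ 2 ^ d * D * t ^ α := by
            apply mul_le_mul_of_nonneg_left e1 (by positivity)
        _ ≤ 2 ^ (d+1) * D * t ^ α := by
            apply mul_le_mul_of_nonneg_right _ (Real.rpow_nonneg ht0.le α)
            exact mul_le_mul_of_nonneg_right (pow_le_pow_right₀ one_le_two (Nat.le_succ d)) hD0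
end
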